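/- With the two-walker quantum-walk setup below, let τ : (C ⊗ C) ⊗ (W ⊗ W) ≃ (C ⊗ W) ⊗ (C ⊗ W) be the canonical reordering linear equivalence with τ((c ⊗ c') ⊗ (w ⊗ w')) = (c ⊗ w) ⊗ (c' ⊗ w'), and let M₊ : C ⊗ C → C ⊗ C be the triplet projector, the linear map with M₊(↑⊗↑) = 0, M₊(↓⊗↓) = 0, and M₊(↑⊗↓) = M₊(↓⊗↑) = (1/2)(↑⊗↓ + ↓⊗↑). Then post-selecting the second-step anti-symmetric-coin state with M₊ gives τ ∘ (M₊ ⊗ id_{W⊗W}) ∘ τ⁻¹ applied to 𝒰(π/4)² ψ₀⁻ equals (1/(4√2)) [ (↑⊗|2⟩)⊗(↓⊗|−2⟩) − (↑⊗|−2⟩)⊗(↓⊗|2⟩) + (↓⊗|2⟩)⊗(↑⊗|−2⟩) − (↓⊗|−2⟩)⊗(↑⊗|2⟩) ], whose walker part is proportional to the anti-symmetric state |2,−2⟩ − |−2,2⟩ of Eq. (31). -/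
import Mathlib


open TensorProduct

set_option maxSynthPendingDepth 5

noncomputable section QuantumWalk

/-- The coin space `C = Fin 2 → ℂ`. -/
abbrev CoinSp : Type := Fin 2 → ℂ

/-- The walker space `W = ℤ →₀ ℂ`. -/
abbrev WalkSp : Type := ℤ →₀ ℂ

/-- Spin up `↑ = e₀`. -/
def up : CoinSp := Pi.single 0 1

/-- Spin down `↓ = e₁`. -/
def dn : CoinSp := Pi.single 1 1

/-- Walker position basis vector `|i⟩ = δ_i`. -/
def ket (i : ℤ) : WalkSp := Finsupp.single i 1

/-- The coin operator `C₁(θ)`, with matrix `[[cos θ, sin θ], [sin θ, -cos θ]]`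
in the basis `(↑, ↓)`. -/
def coinOp (θ : ℝ) : CoinSp →ₗ[ℂ] CoinSp :=
  Matrix.toLin' !![(Real.cos θ : ℂ), (Real.sin θ : ℂ); (Real.sin θ : ℂ), -(Real.cos θ : ℂ)]

/-- The coordinate projector `|↑⟩⟨↑|` on the coin space. -/
def proj0 : CoinSp →ₗ[ℂ] CoinSp := Matrix.toLin' !![1, 0; 0, 0]

/-- The coordinate projector `|↓⟩⟨↓|` on the coin space. -/
def proj1 : CoinSp →ₗ[ℂ] CoinSp := Matrix.toLin' !![0, 0; 0, 1]

/-- The right shift `R |i⟩ = |i+1⟩`. -/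
def Rshift : WalkSp →ₗ[ℂ] WalkSp := Finsupp.lmapDomain ℂ ℂ (fun i => i + 1)

/-- The left shift `L |i⟩ = |i-1⟩`. -/
def Lshift : WalkSp →ₗ[ℂ] WalkSp := Finsupp.lmapDomain ℂ ℂ (fun i => i - 1)

/-- The shift operator `S₁ = |↑⟩⟨↑| ⊗ R + |↓⟩⟨↓| ⊗ L`. -/
def S1 : CoinSp ⊗[ℂ] WalkSp →ₗ[ℂ] CoinSp ⊗[ℂ] WalkSp :=
  TensorProduct.map proj0 Rshift + TensorProduct.map proj1 Lshift

/-- The one-walker step `U(θ) = S₁ ∘ (C₁(θ) ⊗ id)`. -/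
def Ustep (θ : ℝ) : CoinSp ⊗[ℂ] WalkSp →ₗ[ℂ] CoinSp ⊗[ℂ] WalkSp :=
  S1 ∘ₗ TensorProduct.map (coinOp θ) LinearMap.id

/-- The two-walker step `𝒰(θ) = U(θ) ⊗ U(θ)`. -/
def calU (θ : ℝ) : Module.End ℂ ((CoinSp ⊗[ℂ] WalkSp) ⊗[ℂ] (CoinSp ⊗[ℂ] WalkSp)) :=
  TensorProduct.map (Ustep θ) (Ustep θ)

/-- The anti-symmetric initial state
`ψ₀⁻ = (1/√2)((↑⊗|0⟩)⊗(↓⊗|0⟩) - (↓⊗|0⟩)⊗(↑⊗|0⟩))`. -/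
def psiMinus : (CoinSp ⊗[ℂ] WalkSp) ⊗[ℂ] (CoinSp ⊗[ℂ] WalkSp) :=
  ((1 : ℂ) / Real.sqrt 2) •
    ((up ⊗ₜ[ℂ] ket 0) ⊗ₜ[ℂ] (dn ⊗ₜ[ℂ] ket 0) - (dn ⊗ₜ[ℂ] ket 0) ⊗ₜ[ℂ] (up ⊗ₜ[ℂ] ket 0))

/-- The symmetric initial state
`ψ₀⁺ = (1/√2)((↑⊗|0⟩)⊗(↓⊗|0⟩) + (↓⊗|0⟩)⊗(↑⊗|0⟩))`. -/
def psiPlus : (CoinSp ⊗[ℂ] WalkSp) ⊗[ℂ] (CoinSp ⊗[ℂ] WalkSp) :=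
  ((1 : ℂ) / Real.sqrt 2) •
    ((up ⊗ₜ[ℂ] ket 0) ⊗ₜ[ℂ] (dn ⊗ₜ[ℂ] ket 0) + (dn ⊗ₜ[ℂ] ket 0) ⊗ₜ[ℂ] (up ⊗ₜ[ℂ] ket 0))

/-- The canonical reordering equivalence
`τ : (C ⊗ C) ⊗ (W ⊗ W) ≃ (C ⊗ W) ⊗ (C ⊗ W)`,
`τ ((c ⊗ c') ⊗ (w ⊗ w')) = (c ⊗ w) ⊗ (c' ⊗ w')`. -/
def tau : (CoinSp ⊗[ℂ] CoinSp) ⊗[ℂ] (WalkSp ⊗[ℂ] WalkSp) ≃ₗ[ℂ]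
    (CoinSp ⊗[ℂ] WalkSp) ⊗[ℂ] (CoinSp ⊗[ℂ] WalkSp) :=
  TensorProduct.tensorTensorTensorComm ℂ CoinSp CoinSp WalkSp WalkSp

lemma coin_up (θ : ℝ) : coinOp θ up = (Real.cos θ : ℂ) • up + (Real.sin θ : ℂ) • dn := by
  funext j
  fin_cases j <;>
    simp [coinOp, up, dn, Matrix.toLin'_apply, Matrix.mulVec, dotProduct, Pi.single_apply,
      Fin.sum_univ_succ]

lemma coin_dn (θ : ℝ) : coinOp θ dn = (Real.sin θ : ℂ) • up - (Real.cos θ : ℂ) • dn := by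
  funext j
  fin_cases j <;>
    simp [coinOp, up, dn, Matrix.toLin'_apply, Matrix.mulVec, dotProduct, Pi.single_apply,
      Fin.sum_univ_succ]

lemma proj0_up : proj0 up = up := by
  funext j; fin_cases j <;>
    simp [proj0, up, Matrix.toLin'_apply, Matrix.mulVec, dotProduct, Pi.single_apply,
      Fin.sum_univ_succ]

lemma proj0_dn : proj0 dn = 0 := by
  funext j; fin_cases j <;>
    simp [proj0, dn, Matrix.toLin'_apply, Matrix.mulVec, dotProduct, Pi.single_apply,
      Fin.sum_univ_succ]

lemma proj1_up : proj1 up = 0 := by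
  funext j; fin_cases j <;>
    simp [proj1, up, Matrix.toLin'_apply, Matrix.mulVec, dotProduct, Pi.single_apply,
      Fin.sum_univ_succ]

lemma proj1_dn : proj1 dn = dn := by
  funext j; fin_cases j <;>
    simp [proj1, dn, Matrix.toLin'_apply, Matrix.mulVec, dotProduct, Pi.single_apply,
      Fin.sum_univ_succ]

lemma Rshift_ket (i : ℤ) : Rshift (ket i) = ket (i + 1) := by
  simp only [Rshift, ket, Finsupp.lmapDomain_apply, Finsupp.mapDomain_single]

lemma Lshift_ket (i : ℤ) : Lshift (ket i) = ket (i - 1) := by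
  simp only [Lshift, ket, Finsupp.lmapDomain_apply, Finsupp.mapDomain_single]

lemma S1_up (w : WalkSp) : S1 (up ⊗ₜ[ℂ] w) = up ⊗ₜ[ℂ] Rshift w := by
  simp [S1, proj0_up, proj1_up]

lemma S1_dn (w : WalkSp) : S1 (dn ⊗ₜ[ℂ] w) = dn ⊗ₜ[ℂ] Lshift w := by
  simp [S1, proj0_dn, proj1_dn]
lemma U_up (i : ℤ) : Ustep (Real.pi / 4) (up ⊗ₜ[ℂ] ket i) =
    ((Real.sqrt 2 : ℂ) / 2) • (up ⊗ₜ[ℂ] ket (i + 1)) +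
    ((Real.sqrt 2 : ℂ) / 2) • (dn ⊗ₜ[ℂ] ket (i - 1)) := by
  simp only [Ustep, LinearMap.comp_apply, TensorProduct.map_tmul, LinearMap.id_apply,
    coin_up, Real.cos_pi_div_four, Real.sin_pi_div_four]
  rw [TensorProduct.add_tmul, ← TensorProduct.smul_tmul', ← TensorProduct.smul_tmul']
  simp only [map_add, map_smul, S1_up, S1_dn, Rshift_ket, Lshift_ket]
  push_cast
  ring_nf

lemma U_dn (i : ℤ) : Ustep (Real.pi / 4) (dn ⊗ₜ[ℂ] ket i) =
    ((Real.sqrt 2 : ℂ) / 2) • (up ⊗ₜ[ℂ] ket (i + 1)) -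
    ((Real.sqrt 2 : ℂ) / 2) • (dn ⊗ₜ[ℂ] ket (i - 1)) := by
  simp only [Ustep, LinearMap.comp_apply, TensorProduct.map_tmul, LinearMap.id_apply,
    coin_dn, Real.cos_pi_div_four, Real.sin_pi_div_four]
  rw [TensorProduct.sub_tmul, ← TensorProduct.smul_tmul', ← TensorProduct.smul_tmul']
  simp only [map_sub, map_smul, S1_up, S1_dn, Rshift_ket, Lshift_ket]
  push_cast
  ring_nf
lemma sqhalf : ((Real.sqrt 2 : ℂ)/2) * ((Real.sqrt 2 : ℂ)/2) = 1/2 := by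
  rw [div_mul_div_comm, ← Complex.ofReal_mul, Real.mul_self_sqrt (by norm_num)]
  norm_num

lemma U2_up : Ustep (Real.pi/4) (Ustep (Real.pi/4) (up ⊗ₜ[ℂ] ket 0)) =
    ((1:ℂ)/2) • (up ⊗ₜ[ℂ] ket 2) + ((1:ℂ)/2) • (up ⊗ₜ[ℂ] ket 0)
    + ((1:ℂ)/2) • (dn ⊗ₜ[ℂ] ket 0) - ((1:ℂ)/2) • (dn ⊗ₜ[ℂ] ket (-2)) := by
  rw [U_up]
  simp only [map_add, map_smul, U_up, U_dn, smul_add, smul_sub, smul_smul, sqhalf]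
  norm_num
  module

lemma U2_dn : Ustep (Real.pi/4) (Ustep (Real.pi/4) (dn ⊗ₜ[ℂ] ket 0)) =
    ((1:ℂ)/2) • (up ⊗ₜ[ℂ] ket 2) - ((1:ℂ)/2) • (up ⊗ₜ[ℂ] ket 0)
    + ((1:ℂ)/2) • (dn ⊗ₜ[ℂ] ket 0) + ((1:ℂ)/2) • (dn ⊗ₜ[ℂ] ket (-2)) := by
  rw [U_dn]
  simp only [map_add, map_sub, map_smul, U_up, U_dn, smul_add, smul_sub, smul_smul, sqhalf]
  norm_num
  module
lemma reorder (Mp : CoinSp ⊗[ℂ] CoinSp →ₗ[ℂ] CoinSp ⊗[ℂ] CoinSp)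
    (c c' : CoinSp) (w w' : WalkSp) :
    (tau.toLinearMap ∘ₗ
        TensorProduct.map Mp (LinearMap.id : WalkSp ⊗[ℂ] WalkSp →ₗ[ℂ] WalkSp ⊗[ℂ] WalkSp) ∘ₗ
        tau.symm.toLinearMap) ((c ⊗ₜ[ℂ] w) ⊗ₜ[ℂ] (c' ⊗ₜ[ℂ] w')) =
      tau (Mp (c ⊗ₜ[ℂ] c') ⊗ₜ[ℂ] (w ⊗ₜ[ℂ] w')) := by
  simp [tau, TensorProduct.tensorTensorTensorComm_symm,
    TensorProduct.tensorTensorTensorComm_tmul]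
set_option synthInstance.maxHeartbeats 1000000 in
set_option maxHeartbeats 2000000 in
/-- Eq. (31), first line: post-selecting the second-step anti-symmetric-coin
state with the (non-local) triplet projector `M₊` on the coins yields a state
whose walker part is proportional to the anti-symmetric state
`|2,-2⟩ - |-2,2⟩`. -/
theorem triplet_post_selected_second_step_antisymmetric_coin
    (Mp : CoinSp ⊗[ℂ] CoinSp →ₗ[ℂ] CoinSp ⊗[ℂ] CoinSp)
    (hMp_uu : Mp (up ⊗ₜ[ℂ] up) = 0)
    (hMp_dd : Mp (dn ⊗ₜ[ℂ] dn) = 0)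
    (hMp_ud : Mp (up ⊗ₜ[ℂ] dn) = ((1 : ℂ) / 2) • (up ⊗ₜ[ℂ] dn + dn ⊗ₜ[ℂ] up))
    (hMp_du : Mp (dn ⊗ₜ[ℂ] up) = ((1 : ℂ) / 2) • (up ⊗ₜ[ℂ] dn + dn ⊗ₜ[ℂ] up)) :
    (tau.toLinearMap ∘ₗ
        TensorProduct.map Mp (LinearMap.id : WalkSp ⊗[ℂ] WalkSp →ₗ[ℂ] WalkSp ⊗[ℂ] WalkSp) ∘ₗ
        tau.symm.toLinearMap)
      (((calU (Real.pi / 4)) ^ 2) psiMinus) =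
    ((1 : ℂ) / (4 * Real.sqrt 2)) •
      ( (up ⊗ₜ[ℂ] ket 2) ⊗ₜ[ℂ] (dn ⊗ₜ[ℂ] ket (-2))
      - (up ⊗ₜ[ℂ] ket (-2)) ⊗ₜ[ℂ] (dn ⊗ₜ[ℂ] ket 2)
      + (dn ⊗ₜ[ℂ] ket 2) ⊗ₜ[ℂ] (up ⊗ₜ[ℂ] ket (-2))
      - (dn ⊗ₜ[ℂ] ket (-2)) ⊗ₜ[ℂ] (up ⊗ₜ[ℂ] ket 2)) := by
  have hstate : ((calU (Real.pi / 4)) ^ 2) psiMinus =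
      ((1 : ℂ) / Real.sqrt 2) •
        ((Ustep (Real.pi/4) (Ustep (Real.pi/4) (up ⊗ₜ[ℂ] ket 0))) ⊗ₜ[ℂ]
          (Ustep (Real.pi/4) (Ustep (Real.pi/4) (dn ⊗ₜ[ℂ] ket 0)))
        - (Ustep (Real.pi/4) (Ustep (Real.pi/4) (dn ⊗ₜ[ℂ] ket 0))) ⊗ₜ[ℂ]
          (Ustep (Real.pi/4) (Ustep (Real.pi/4) (up ⊗ₜ[ℂ] ket 0)))) := by
    rw [pow_two, Module.End.mul_apply]
    simp only [psiMinus, calU, map_smul, map_sub, TensorProduct.map_tmul]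
  rw [hstate, U2_up, U2_dn]
  simp only [map_smul, map_sub, map_add, TensorProduct.tmul_add, TensorProduct.tmul_sub,
    TensorProduct.add_tmul, TensorProduct.sub_tmul, TensorProduct.tmul_smul,
    ← TensorProduct.smul_tmul']
  simp only [map_add, map_sub, map_smul, reorder]
  simp only [hMp_uu, hMp_dd, hMp_ud, hMp_du, TensorProduct.zero_tmul, map_zero, smul_zero,
    ← TensorProduct.smul_tmul', TensorProduct.add_tmul, map_add, map_smul,
    tau, TensorProduct.tensorTensorTensorComm_tmul, smul_add, smul_sub]
  match_scalars <;> ring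

end QuantumWalk
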